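/- arXiv:1709.02772 — 2 statements merged into one kernel-verified Lean document; each statement's English description precedes it below -/
import Mathlib

section
/- Suppose B ∈ ℋ_n(𝔬)^{nd} is optimal and GK(B) = a. For U ∈ GL_n(𝔬), the matrix B[U] is optimal if and only if U ∈ G_a. -/
open Matrix
open scoped Classical

noncomputable section

/-- The data of a normalized additive discrete valuation `ord` on a field `F`
(`ord ϖ = 1` for a prime element `ϖ`, `ord 0 = ∞`), together with the axioms making `F`
a non-archimedean local field: `ord` is a surjective discrete valuation, the residue
field is finite, and `F` is complete. -/
structure LocalFieldData (F : Type*) [Field F] where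
  ord : F → WithTop ℤ
  ord_zero : ord 0 = ⊤
  ord_eq_top : ∀ x : F, ord x = ⊤ → x = 0
  ord_one : ord 1 = 0
  ord_neg : ∀ x : F, ord (-x) = ord x
  ord_mul : ∀ x y : F, ord (x * y) = ord x + ord y
  ord_add : ∀ x y : F, min (ord x) (ord y) ≤ ord (x + y)
  ord_surj : ∀ m : ℤ, ∃ x : F, ord x = (m : WithTop ℤ)
  residue_finite : ∃ S : Finset F, ∀ x : F, 0 ≤ ord x → ∃ s ∈ S, 0 < ord (x - s)
  complete : ∀ f : ℕ → F,
    (∀ N : ℤ, ∃ M : ℕ, ∀ m ≥ M, ∀ k ≥ M, (N : WithTop ℤ) ≤ ord (f m - f k)) →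
    ∃ L : F, ∀ N : ℤ, ∃ M : ℕ, ∀ m ≥ M, (N : WithTop ℤ) ≤ ord (f m - L)

/-- The (non-strict) lexicographic order on sequences: `y ⪯ z`. -/
def lexLE {n : ℕ} (y z : Fin n → ℤ) : Prop :=
  y = z ∨ ∃ j : Fin n, y j < z j ∧ ∀ i : Fin n, i < j → y i = z i

/-- `d` is a square in `F`. -/
def IsSq {F : Type*} [Field F] (d : F) : Prop := ∃ y : F, y ^ 2 = d

/-- `D_B = (-4)^{⌊n/2⌋} · det B`. -/
def DB {F : Type*} [Field F] {n : ℕ} (B : Matrix (Fin n) (Fin n) F) : F :=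
  (-4 : F) ^ (n / 2) * B.det

/-- The upper-left `m × m` submatrix `B^{(m)}` (junk entries `0` out of range). -/
def upperLeft {α : Type*} [Zero α] {n : ℕ} (B : Matrix (Fin n) (Fin n) α) (m : ℕ) :
    Matrix (Fin m) (Fin m) α :=
  Matrix.of fun i j =>
    if h : (i : ℕ) < n ∧ (j : ℕ) < n then B ⟨(i : ℕ), h.1⟩ ⟨(j : ℕ), h.2⟩ else 0

/-- The first `m` entries of a sequence (junk value `0` out of range). -/
def restrictSeq {n : ℕ} (a : Fin n → ℤ) (m : ℕ) : Fin m → ℤ :=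
  fun i => if h : (i : ℕ) < n then a ⟨(i : ℕ), h⟩ else 0

/-- An `a`-admissible involution `σ` (Definition 1.6). -/
def Admissible {n : ℕ} (a : Fin n → ℤ) (σ : Equiv.Perm (Fin n)) : Prop :=
  (∀ i, σ (σ i) = i) ∧
  -- (i) 𝒫⁰ has at most two elements
  (∀ i j k : Fin n, σ i = i → σ j = j → σ k = k → i = j ∨ i = k ∨ j = k) ∧
  -- (i) two distinct fixed points have different parities of `a`
  (∀ i j : Fin n, σ i = i → σ j = j → i ≠ j → ¬ (a i % 2 = a j % 2)) ∧
  -- (i) a fixed point is maximal in its block and maximal among `𝒫⁰ ∪ 𝒫⁺` of the same parity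
  (∀ i : Fin n, σ i = i →
    (∀ j : Fin n, a j = a i → j ≤ i) ∧
    ∀ j : Fin n, (σ j = j ∨ a (σ j) < a j) → a j % 2 = a i % 2 → j ≤ i) ∧
  -- (ii) at most one element of `I_s ∩ 𝒫⁻`
  (∀ i j : Fin n, a i = a j → a i < a (σ i) → a j < a (σ j) → i = j) ∧
  -- (ii) an element of `I_s ∩ 𝒫⁻` is maximal in `I_s` and is paired with the minimum
  (∀ i : Fin n, a i < a (σ i) →
    (∀ j : Fin n, a j = a i → j ≤ i) ∧
    IsLeast {j : Fin n | a (σ j) < a j ∧ i < j ∧ a j % 2 = a i % 2} (σ i)) ∧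
  -- (iii) at most one element of `I_s ∩ 𝒫⁺`
  (∀ i j : Fin n, a i = a j → a (σ i) < a i → a (σ j) < a j → i = j) ∧
  -- (iii) an element of `I_s ∩ 𝒫⁺` is minimal in `I_s` and is paired with the maximum
  (∀ i : Fin n, a (σ i) < a i →
    (∀ j : Fin n, a j = a i → i ≤ j) ∧
    IsGreatest {j : Fin n | a j < a (σ j) ∧ j < i ∧ a j % 2 = a i % 2} (σ i)) ∧
  -- (iv)
  (∀ i : Fin n, a i = a (σ i) → (((i : ℕ) : ℤ) - ((σ i : Fin n) : ℕ)).natAbs ≤ 1)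

/-- The combinatorial data of a decomposition of an `n × n` matrix into `r` consecutive
diagonal blocks, each of size `1` or `2`, the `s`-th block being scaled by `2^(k s)`:
`c` is the sequence of cumulative block boundaries. -/
structure BlockData (n : ℕ) where
  r : ℕ
  c : ℕ → ℕ
  k : ℕ → ℕ
  c_zero : c 0 = 0
  c_last : c r = n
  c_lt : ∀ s < r, c s < c (s + 1)
  size_le : ∀ s < r, c (s + 1) ≤ c s + 2

namespace BlockData

variable {n : ℕ} (bd : BlockData n)

/-- `i` belongs to the `s`-th block. -/
def InBlock (s : ℕ) (i : Fin n) : Prop := bd.c s ≤ (i : ℕ) ∧ (i : ℕ) < bd.c (s + 1)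

/-- The size (`deg C_s`) of the `s`-th block. -/
def size (s : ℕ) : ℕ := bd.c (s + 1) - bd.c s

end BlockData

/-- The description of the maximal constant blocks of a non-decreasing sequence `a`:
`Ns` is the sequence of cumulative block lengths `n_s^*` and `ms` the sequence of values. -/
def BlocksOf {n : ℕ} (a : Fin n → ℤ) (r : ℕ) (Ns : ℕ → ℕ) (ms : ℕ → ℤ) : Prop :=
  Ns 0 = 0 ∧ Ns r = n ∧ (∀ s < r, Ns s < Ns (s + 1)) ∧
  (∀ s < r, ∀ i : Fin n, Ns s ≤ (i : ℕ) → (i : ℕ) < Ns (s + 1) → a i = ms s) ∧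
  (∀ s, s + 1 < r → ms s < ms (s + 1))

/-- `(n₁,…,n_r; m₁,…,m_r; ζ₁,…,ζ_r)` (encoded via the cumulative sums `Ns (s+1) = n_{s+1}^*`,
`ms s = m_{s+1}`, `zs s = ζ_{s+1}`) is an EGK datum of length `n` (Definition 4.2). -/
def IsEGKDatum (n r : ℕ) (Ns : ℕ → ℕ) (ms zs : ℕ → ℤ) : Prop :=
  Ns 0 = 0 ∧ Ns r = n ∧ (∀ s < r, Ns s < Ns (s + 1)) ∧
  (∀ s < r, 0 ≤ ms s) ∧ (∀ s, s + 1 < r → ms s < ms (s + 1)) ∧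
  (∀ s < r, zs s = 0 ∨ zs s = 1 ∨ zs s = -1) ∧
  -- (E2)
  (∀ s < r, Even (Ns (s + 1)) →
    (zs s ≠ 0 ↔ Even (∑ u ∈ Finset.range (s + 1), ms u * ((Ns (u + 1) : ℤ) - (Ns u : ℤ))))) ∧
  -- (E3)
  (∀ s < r, ¬ Even (Ns (s + 1)) →
    zs s ≠ 0 ∧
    ((∀ i < s, Even (Ns (i + 1))) →
      zs s = ∏ u ∈ Finset.range s, zs u ^ (ms u + ms (u + 1)).toNat) ∧
    (∀ t < s, ¬ Even (Ns (t + 1)) → (∀ i, t < i → i < s → Even (Ns (i + 1))) →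
      Even ((∑ u ∈ Finset.range s, ms u * ((Ns (u + 1) : ℤ) - (Ns u : ℤ))) +
        ms s * ((Ns (s + 1) : ℤ) - (Ns s : ℤ) - 1)) →
      zs s = zs t * ∏ u ∈ Finset.Ico (t + 1) s, zs u ^ (ms u + ms (u + 1)).toNat))

/-- `(a₁,…,a_n; ε₁,…,ε_n)` is a naive EGK datum of length `n` (Definition 4.1);
the index `i : Fin n` corresponds to the (1-based) index `(i : ℕ) + 1` of the paper. -/
def IsNaiveEGK (n : ℕ) (a ε : Fin n → ℤ) : Prop :=
  (∀ i, 0 ≤ a i) ∧ (∀ i j : Fin n, i ≤ j → a i ≤ a j) ∧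
  (∀ i, ε i = 0 ∨ ε i = 1 ∨ ε i = -1) ∧
  -- (N2)
  (∀ i : Fin n, Even ((i : ℕ) + 1) →
    (ε i ≠ 0 ↔ Even (∑ j ∈ Finset.univ.filter (fun j : Fin n => j ≤ i), a j))) ∧
  -- (N3)
  (∀ i : Fin n, ¬ Even ((i : ℕ) + 1) → ε i ≠ 0) ∧
  -- (N4)
  (∀ h : 0 < n, ε ⟨0, h⟩ = 1) ∧
  -- (N5)
  (∀ i : Fin n, 2 ≤ (i : ℕ) → ¬ Even ((i : ℕ) + 1) →
    Even (∑ j ∈ Finset.univ.filter (fun j : Fin n => j < i), a j) →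
    ∀ (h2 : (i : ℕ) - 2 < n) (h1 : (i : ℕ) - 1 < n),
      ε i = ε ⟨(i : ℕ) - 2, h2⟩ * ε ⟨(i : ℕ) - 1, h1⟩ ^ (a i + a ⟨(i : ℕ) - 1, h1⟩).toNat)

/-- `Υ(a₁,…,a_n; ε₁,…,ε_n) = (n₁,…,n_r; m₁,…,m_r; ζ₁,…,ζ_r)` (encoded via cumulative
block lengths `Ns`). -/
def UpsilonRel (n : ℕ) (a ε : Fin n → ℤ) (r : ℕ) (Ns : ℕ → ℕ) (ms zs : ℕ → ℤ) : Prop :=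
  BlocksOf a r Ns ms ∧
  (∀ s < r, ∀ h : Ns (s + 1) - 1 < n, zs s = ε ⟨Ns (s + 1) - 1, h⟩)

/-- The Hilbert symbol `⟨a, b⟩ ∈ {±1}`. -/
def hilbertSym {F : Type*} [Field F] (a b : F) : ℤ :=
  if ∃ x y : F, a * x ^ 2 + b * y ^ 2 = 1 then 1 else -1

/-- `e` is the Clifford invariant `η_B` of `B` (Definition 1.4), computed via a
`GL_n(F)`-diagonalization of `B`. -/
def IsCliffordInv {F : Type*} [Field F] {n : ℕ} (B : Matrix (Fin n) (Fin n) F) (e : ℤ) :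
    Prop :=
  ∃ (P : Matrix (Fin n) (Fin n) F) (d : Fin n → F),
    IsUnit P.det ∧ Pᵀ * B * P = Matrix.diagonal d ∧
    e = hilbertSym (-1) (-1 : F) ^ ((n + 1) / 4) * hilbertSym (-1) B.det ^ ((n - 1) / 2) *
      ∏ j : Fin n, ∏ i ∈ Finset.univ.filter (fun i : Fin n => i < j), hilbertSym (d i) (d j)

namespace LocalFieldData

variable {F : Type*} [Field F] (v : LocalFieldData F)

/-- `x` lies in the ring of integers `𝔬`. -/
def Integer (x : F) : Prop := 0 ≤ v.ord x

/-- `ord` as an integer-valued function (junk value `0` at `x = 0`). -/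
def ordZ (x : F) : ℤ := (v.ord x).untopD 0

/-- `U ∈ GL_n(𝔬)`. -/
def IsUnimodular {n : ℕ} (U : Matrix (Fin n) (Fin n) F) : Prop :=
  (∀ i j, v.Integer (U i j)) ∧ v.ord U.det = 0

/-- `B` and `B'` are `GL_n(𝔬)`-equivalent. -/
def Equivalent {n : ℕ} (B B' : Matrix (Fin n) (Fin n) F) : Prop :=
  ∃ U : Matrix (Fin n) (Fin n) F, v.IsUnimodular U ∧ B' = Uᵀ * B * U

/-- `B ∈ ℋ_n(𝔬)`: a half-integral symmetric matrix. -/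
def IsHalfIntegral {n : ℕ} (B : Matrix (Fin n) (Fin n) F) : Prop :=
  B.IsSymm ∧ (∀ i, v.Integer (B i i)) ∧ ∀ i j, v.Integer (2 * B i j)

/-- `B ∈ 𝓜(a)`: `ord(b_ii) ≥ a_i` and `ord(2 b_ij) ≥ (a_i + a_j)/2`. -/
def MemM {n : ℕ} (B : Matrix (Fin n) (Fin n) F) (a : Fin n → ℤ) : Prop :=
  (∀ i, (a i : WithTop ℤ) ≤ v.ord (B i i)) ∧
  ∀ i j, ((a i + a j : ℤ) : WithTop ℤ) ≤ v.ord (2 * B i j) + v.ord (2 * B i j)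

/-- `a ∈ S(B)`. -/
def MemS {n : ℕ} (B : Matrix (Fin n) (Fin n) F) (a : Fin n → ℤ) : Prop :=
  (∀ i, 0 ≤ a i) ∧ (∀ i j : Fin n, i ≤ j → a i ≤ a j) ∧ v.MemM B a

/-- `a ∈ 𝐒({B})`. -/
def MemSS {n : ℕ} (B : Matrix (Fin n) (Fin n) F) (a : Fin n → ℤ) : Prop :=
  ∃ U : Matrix (Fin n) (Fin n) F, v.IsUnimodular U ∧ v.MemS (Uᵀ * B * U) a

/-- `a` is the Gross–Keating invariant of `B`: the greatest element of `𝐒({B})` in the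
lexicographic order. -/
def IsGK {n : ℕ} (B : Matrix (Fin n) (Fin n) F) (a : Fin n → ℤ) : Prop :=
  v.MemSS B a ∧ ∀ b : Fin n → ℤ, v.MemSS B b → lexLE b a

/-- `B` is optimal: `GK(B) ∈ S(B)`. -/
def IsOptimal {n : ℕ} (B : Matrix (Fin n) (Fin n) F) : Prop :=
  ∃ a : Fin n → ℤ, v.IsGK B a ∧ v.MemS B a

/-- Membership condition for the group `G_a`:
`ord(g_ij) ≥ (a_j - a_i)/2` whenever `a_i < a_j`. -/
def GCond {n : ℕ} (a : Fin n → ℤ) (g : Matrix (Fin n) (Fin n) F) : Prop :=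
  ∀ i j : Fin n, a i < a j → ((a j - a i : ℤ) : WithTop ℤ) ≤ v.ord (g i j) + v.ord (g i j)

/-- `F(√d)/F` is a quadratic unramified extension, characterized via local class field
theory: `d` is not a square, and every unit of `𝔬` is a norm from `F(√d)`. -/
def UnramifiedQuadratic (d : F) : Prop :=
  ¬ IsSq d ∧ ∀ x : F, v.ord x = 0 → ∃ a b : F, x = a ^ 2 - d * b ^ 2

/-- `ξ_B ∈ {1, -1, 0}` according as `D_B` is a square, `F(√D_B)/F` is unramified quadratic,
or `F(√D_B)/F` is ramified. -/
def xi {n : ℕ} (B : Matrix (Fin n) (Fin n) F) : ℤ :=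
  if IsSq (DB B) then 1 else if v.UnramifiedQuadratic (DB B) then -1 else 0

/-- `ord 𝔇` for the quadratic extension `F(√d)/F`: the minimal valuation of the
discriminant `4 y² d` of an integral generator `x + y √d` of `F[√d]`. -/
def discOrd (d : F) : ℤ :=
  sInf {m : ℤ | ∃ x y : F, v.Integer (2 * x) ∧ v.Integer (x ^ 2 - d * y ^ 2) ∧
    v.ord (4 * y ^ 2 * d) = (m : WithTop ℤ)}

/-- `Δ(B)` (Definition 1.3). -/
def Delta {n : ℕ} (B : Matrix (Fin n) (Fin n) F) : ℤ :=
  if Even n then v.ordZ (DB B) - v.discOrd (DB B) + 1 - (v.xi B) ^ 2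
  else v.ordZ (DB B)

/-- `B` is a reduced form of GK-type `(a, σ)` (Definition 1.8). -/
def IsReducedForm {n : ℕ} (B : Matrix (Fin n) (Fin n) F) (a : Fin n → ℤ)
    (σ : Equiv.Perm (Fin n)) : Prop :=
  v.MemM B a ∧
  -- (1)
  (∀ i : Fin n, σ i ≠ i →
    v.ord (2 * B i (σ i)) + v.ord (2 * B i (σ i)) = ((a i + a (σ i) : ℤ) : WithTop ℤ)) ∧
  (∀ i : Fin n, a i < a (σ i) → v.ord (B i i) = (a i : WithTop ℤ)) ∧
  -- (2)
  (∀ i : Fin n, σ i = i → v.ord (B i i) = (a i : WithTop ℤ)) ∧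
  -- (3)
  (∀ i j : Fin n, j ≠ i → j ≠ σ i →
    ((a i + a j : ℤ) : WithTop ℤ) < v.ord (2 * B i j) + v.ord (2 * B i j))

/-- The `s`-th block of `B` is `2^{k_s} C_s` with `C_s` a unimodular diagonal matrix. -/
def DiagBlock {n : ℕ} (B : Matrix (Fin n) (Fin n) F) (bd : BlockData n) (s : ℕ) : Prop :=
  ∀ i j : Fin n, bd.InBlock s i → bd.InBlock s j →
    (i = j → v.ord (B i i) = ((bd.k s : ℤ) : WithTop ℤ)) ∧ (i ≠ j → B i j = 0)

/-- The `s`-th block of `B` is `2^{k_s} C_s` with `C_s ∈ ½(S₂(𝔬)_e ∩ GL₂(𝔬))`. -/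
def EvenBlock {n : ℕ} (B : Matrix (Fin n) (Fin n) F) (bd : BlockData n) (s : ℕ) : Prop :=
  bd.c (s + 1) = bd.c s + 2 ∧
  ∀ i j : Fin n, bd.InBlock s i → bd.InBlock s j →
    (i = j → ((bd.k s : ℤ) : WithTop ℤ) ≤ v.ord (B i i)) ∧
    (i ≠ j → v.ord (2 * B i j) = ((bd.k s : ℤ) : WithTop ℤ))

/-- `B = 2^{k₁}C₁ ⊥ ⋯ ⊥ 2^{k_r}C_r` is a pre-optimal form (Definition 2.2), with the
block decomposition recorded by `bd`. -/
def IsPreOptimal {n : ℕ} (B : Matrix (Fin n) (Fin n) F) (bd : BlockData n) : Prop :=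
  v.IsHalfIntegral B ∧ B.det ≠ 0 ∧
  (∀ s t : ℕ, s < bd.r → t < bd.r → s ≠ t →
    ∀ i j : Fin n, bd.InBlock s i → bd.InBlock t j → B i j = 0) ∧
  (∀ s < bd.r, v.DiagBlock B bd s ∨ v.EvenBlock B bd s) ∧
  -- (PO1): `Σ_{j ∈ 𝒟_m} deg C_j ≤ 2`
  (∀ s t : ℕ, s < bd.r → t < bd.r → s ≠ t → v.DiagBlock B bd s → v.DiagBlock B bd t →
    bd.k s = bd.k t → bd.size s + bd.size t ≤ 2) ∧
  (∀ s t u : ℕ, s < bd.r → t < bd.r → u < bd.r → s ≠ t → s ≠ u → t ≠ u →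
    v.DiagBlock B bd s → v.DiagBlock B bd t → v.DiagBlock B bd u →
    bd.k s = bd.k t → bd.k t = bd.k u → False) ∧
  -- (PO1): `ℰ_m` is a set of consecutive integers
  (∀ s t u : ℕ, s ≤ t → t ≤ u → u < bd.r → v.EvenBlock B bd s → v.EvenBlock B bd u →
    bd.k s = bd.k u → v.EvenBlock B bd t ∧ bd.k t = bd.k s) ∧
  -- (PO2)
  (∀ s t : ℕ, s < t → t < bd.r →
    (v.DiagBlock B bd s → v.DiagBlock B bd t → bd.k s ≤ bd.k t) ∧
    (v.EvenBlock B bd s → v.EvenBlock B bd t → bd.k s ≤ bd.k t) ∧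
    (v.DiagBlock B bd s → v.EvenBlock B bd t → bd.k s + 1 ≤ bd.k t) ∧
    (v.EvenBlock B bd s → v.DiagBlock B bd t → bd.k s ≤ bd.k t + 1)) ∧
  -- (PO3)
  (∀ s < bd.r, v.DiagBlock B bd s → bd.size s = 2 →
    1 ≤ s ∧
    ((Even (bd.c (s + 1)) ∧ v.xi (upperLeft B (bd.c s)) = 0 ∧
        v.xi (upperLeft B (bd.c (s + 1))) = 0) ∨
      (Odd (bd.c s) ∧ Even (v.ordZ (Matrix.det (upperLeft B (bd.c s))) + (bd.k s : ℤ))))) ∧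
  -- (PO4)
  (∀ s < bd.r, 1 ≤ s → bd.k (s - 1) = bd.k s + 1 → v.DiagBlock B bd s →
    v.EvenBlock B bd (s - 1) →
    bd.size s = 2 ∨
      (bd.size s = 1 ∧
        ((Even (bd.c (s + 1)) ∧ Even (v.ordZ (Matrix.det (upperLeft B (bd.c (s + 1)))))) ∨
          (Odd (bd.c (s + 1)) ∧ v.xi (upperLeft B (bd.c s)) = 0)))) ∧
  -- (PO5)
  (∀ s : ℕ, s + 1 < bd.r → v.DiagBlock B bd s → v.EvenBlock B bd (s + 1) →
    bd.k (s + 1) = bd.k s + 1 →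
    bd.size s = 1 ∧
      ((Even (bd.c (s + 1)) ∧ Odd (v.ordZ (Matrix.det (upperLeft B (bd.c (s + 1)))))) ∨
        (Odd (bd.c (s + 1)) ∧ (1 ≤ s → v.xi (upperLeft B (bd.c s)) ≠ 0)))) ∧
  -- (PO6)
  (∀ s : ℕ, s + 1 < bd.r → Even (bd.c (s + 1)) → v.DiagBlock B bd s →
    v.DiagBlock B bd (s + 1) → bd.k (s + 1) = bd.k s + 1 →
    v.xi (upperLeft B (bd.c (s + 1))) = 0)

/-- The statement of Theorem 3.1 at the `s`-th block of a pre-optimal form `B`, for the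
(0-indexed) sequence `aN` of entries of `GK(B)`. -/
def GKFormulaAt {n : ℕ} (B : Matrix (Fin n) (Fin n) F) (bd : BlockData n)
    (aN : ℕ → ℤ) (s : ℕ) : Prop :=
  -- (1)
  (v.EvenBlock B bd s →
    aN (bd.c (s + 1) - 2) = (bd.k s : ℤ) ∧ aN (bd.c (s + 1) - 1) = (bd.k s : ℤ)) ∧
  -- (2)
  (v.DiagBlock B bd s → bd.size s = 1 →
    -- (2.1)
    (Odd (bd.c (s + 1)) →
      (Odd (v.ordZ (Matrix.det (upperLeft B (bd.c s)))) →
        aN (bd.c (s + 1) - 1) = (bd.k s : ℤ) + 2) ∧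
      (Even (v.ordZ (Matrix.det (upperLeft B (bd.c s)))) → v.xi (upperLeft B (bd.c s)) = 0 →
        aN (bd.c (s + 1) - 1) = (bd.k s : ℤ) + 1) ∧
      (v.xi (upperLeft B (bd.c s)) ≠ 0 → aN (bd.c (s + 1) - 1) = (bd.k s : ℤ))) ∧
    -- (2.2)
    (Even (bd.c (s + 1)) →
      (Odd (v.ordZ (Matrix.det (upperLeft B (bd.c (s + 1))))) →
        aN (bd.c (s + 1) - 1) = (bd.k s : ℤ)) ∧
      (Even (v.ordZ (Matrix.det (upperLeft B (bd.c (s + 1))))) →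
        v.xi (upperLeft B (bd.c (s + 1))) = 0 →
        aN (bd.c (s + 1) - 1) = (bd.k s : ℤ) + 1) ∧
      (v.xi (upperLeft B (bd.c (s + 1))) ≠ 0 → aN (bd.c (s + 1) - 1) = (bd.k s : ℤ) + 2))) ∧
  -- (3)
  (v.DiagBlock B bd s → bd.size s = 2 →
    aN (bd.c (s + 1) - 2) = (bd.k s : ℤ) + 1 ∧ aN (bd.c (s + 1) - 1) = (bd.k s : ℤ) + 1)

/-- `(n₁,…,n_r; m₁,…,m_r; ζ₁,…,ζ_r)` (encoded via cumulative block lengths `Ns`) is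
the extended Gross–Keating datum `EGK(B)` of `B` (Definition 1.5), computed from an
optimal form `B'` equivalent to `B`. -/
def IsEGK {n : ℕ} (B : Matrix (Fin n) (Fin n) F) (r : ℕ) (Ns : ℕ → ℕ) (ms zs : ℕ → ℤ) :
    Prop :=
  ∃ B' : Matrix (Fin n) (Fin n) F, v.Equivalent B B' ∧
    ∃ a : Fin n → ℤ, v.IsGK B' a ∧ v.MemS B' a ∧ BlocksOf a r Ns ms ∧
      ∀ s < r, (Even (Ns (s + 1)) → zs s = v.xi (upperLeft B' (Ns (s + 1)))) ∧
        (¬ Even (Ns (s + 1)) → IsCliffordInv (upperLeft B' (Ns (s + 1))) (zs s))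

end LocalFieldData



/-!
Write `wt_a(x) = min_k (2 ord x_k + a_k)` for `x ∈ Fⁿ`. For integral `U`, `U ∈ G_a` says exactly
that every column `U e_j` has weight `≥ a_j`. If `B ∈ 𝓜(a)`, then `2 ord (2 B(x, y)) ≥ wt x + wt y`
and `ord B[x] ≥ wt x`, so `U ∈ G_a` gives `B[U] ∈ S(a)`, and `B[U]` is optimal because `GK` is a
`GL_n(𝔬)`-invariant.

Conversely let `B[U] ∈ S(a)` and let a column `x = U e_j` have weight `c < a_j`. Suppose every
column `U⁻¹ e_w` of weight `< a_w` has weight `≥ c`. Then `ord B[x] = ord B[U]_{jj} > c`, and the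
values `B(x, e_w) = (B[U] U⁻¹)_{jw}` are divisible enough that `x`, rescaled to `1` at an index `i₀`
realising `c` with `m = a_{i₀}` largest and truncated to the levels `≤ m`, can replace `e_{i₀}` in
the standard basis. After moving it to the last position `p` of level `m`, `B` lies in `S(b)` for
`b = min(a, m + 1)` with `b_p` raised to `m + 1`; as `b` is lexicographically larger than
`a = GK(B)`, this is impossible. So some column of `U⁻¹` violates `G_a` with a smaller weight. Since
`(B[U], U⁻¹)` satisfies the same hypotheses as `(B, U)`, a violation of minimal weight among the
columns of `U` and `U⁻¹` cannot exist.
-/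

lemma sum_sum_eq_sum_add_sum_sum_lt {ι M : Type*} [Fintype ι] [LinearOrder ι] [AddCommMonoid M]
    (g : ι → ι → M) :
    ∑ k, ∑ l, g k l = ∑ k, g k k + ∑ k, ∑ l, if k < l then g k l + g l k else 0 := by
  calc ∑ k, ∑ l, g k l
      = ∑ k, ∑ l, ((if k = l then g k l else 0) +
          ((if k < l then g k l else 0) + (if l < k then g k l else 0))) := by
        refine Finset.sum_congr rfl fun k _ => Finset.sum_congr rfl fun l _ => ?_
        rcases lt_trichotomy k l with h | rfl | h
        · simp [h, h.ne, h.not_gt]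
        · simp
        · simp [h, h.ne', h.not_gt]
    _ = ∑ k, g k k + (∑ k, ∑ l, (if k < l then g k l else 0) +
          ∑ l, ∑ k, if l < k then g k l else 0) := by
        simp only [Finset.sum_add_distrib, Finset.sum_ite_eq, Finset.mem_univ, if_true]
        rw [Finset.sum_comm (f := fun k l => if l < k then g k l else 0)]
    _ = _ := by
        rw [← Finset.sum_add_distrib]
        congr 1
        refine Finset.sum_congr rfl fun k _ => ?_
        rw [← Finset.sum_add_distrib]
        exact Finset.sum_congr rfl fun l _ => by split_ifs <;> simp

lemma Matrix.transpose_mul_mul_apply {m R : Type*} [Fintype m] [CommSemiring R]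
    (T B : Matrix m m R) (i j : m) : (Tᵀ * B * T) i j = Tᵀ i ⬝ᵥ B *ᵥ Tᵀ j := by
  rw [dotProduct_mulVec, ← mul_apply_eq_vecMul]
  simp [mul_apply, dotProduct, Finset.sum_mul]

lemma WithTop.coe_le_add_of_le {p q s : ℤ} {x y : WithTop ℤ} (hs : s = p + q)
    (hx : (p : WithTop ℤ) ≤ x) (hy : (q : WithTop ℤ) ≤ y) : (s : WithTop ℤ) ≤ x + y := by
  rw [hs, WithTop.coe_add]
  exact add_le_add hx hy

lemma WithTop.coe_le_add_coe_iff {c a : ℤ} {q : WithTop ℤ} :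
    (c : WithTop ℤ) ≤ q + a ↔ ((c - a : ℤ) : WithTop ℤ) ≤ q := by
  induction q using WithTop.recTopCoe with
  | top => simp
  | coe q => norm_cast; omega

lemma WithTop.coe_add_one_le_of_lt {p : ℤ} {q : WithTop ℤ} (h : (p : WithTop ℤ) < q) :
    ((p + 1 : ℤ) : WithTop ℤ) ≤ q := by
  induction q using WithTop.recTopCoe with
  | top => exact le_top
  | coe q => norm_cast at h ⊢

lemma AddValuation.coe_le_map_inv_mul {K : Type*} [Field K] (w : AddValuation K (WithTop ℤ))
    {u y : K} {s t : ℤ} (hu : w u = t) (h : ((s + t : ℤ) : WithTop ℤ) ≤ w y) :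
    (s : WithTop ℤ) ≤ w (u⁻¹ * y) := by
  have hu0 : u ≠ 0 := by
    rintro rfl
    simp at hu
  rw [← mul_inv_cancel_left₀ hu0 y, w.map_mul, hu] at h
  generalize w (u⁻¹ * y) = q at h ⊢
  induction q using WithTop.recTopCoe with
  | top => exact le_top
  | coe q => norm_cast at h ⊢; omega

lemma not_of_alternating_descent {ι κ α : Type*} [Finite ι] [LinearOrder α] {p : ι → Prop}
    {q : κ → Prop} {f : ι → α} {g : κ → α} (hpq : ∀ i, p i → ∃ j, q j ∧ g j < f i)
    (hqp : ∀ j, q j → ∃ i, p i ∧ f i < g j) (i : ι) : ¬ p i := by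
  intro hi
  have : Nonempty {i // p i} := ⟨⟨i, hi⟩⟩
  obtain ⟨⟨i₀, hi₀⟩, hmin⟩ := Finite.exists_min fun i : {i // p i} => f i
  obtain ⟨j, hj, hji⟩ := hpq i₀ hi₀
  obtain ⟨i₁, hi₁, hij⟩ := hqp j hj
  exact (hij.trans hji).not_ge (hmin ⟨i₁, hi₁⟩)

lemma lexLE_antisymm {n : ℕ} {a b : Fin n → ℤ} (hab : lexLE a b) (hba : lexLE b a) : a = b := by
  rcases hab with rfl | ⟨j, hj, hj'⟩
  · rfl
  rcases hba with rfl | ⟨k, hk, hk'⟩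
  · exact absurd hj (lt_irrefl _)
  rcases lt_trichotomy j k with h | rfl | h
  · exact absurd (hk' j h).symm hj.ne
  · exact absurd (hj.trans hk) (lt_irrefl _)
  · exact absurd (hj' k h).symm hk.ne

lemma not_lexLE_of_eq_of_lt {n : ℕ} {a b : Fin n → ℤ} {p : Fin n} (heq : ∀ i < p, b i = a i)
    (hlt : a p < b p) : ¬ lexLE b a := by
  rintro (h | ⟨j, hj, hj'⟩)
  · exact hlt.ne (congrFun h p).symm
  rcases lt_trichotomy j p with h | rfl | h
  · exact hj.ne (heq j h)
  · exact hlt.not_gt hj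
  · exact hlt.ne (hj' p h).symm

def raiseAt {n : ℕ} (a : Fin n → ℤ) (m : ℤ) (p : Fin n) : Fin n → ℤ :=
  Function.update (fun k => min (a k) (m + 1)) p (m + 1)

lemma raiseAt_comp_swap {n : ℕ} {a : Fin n → ℤ} {m : ℤ} {i p : Fin n} (h : a i = a p) :
    raiseAt a m i ∘ Equiv.swap i p = raiseAt a m p := by
  funext k
  simp only [raiseAt, Function.comp_apply, Function.update_apply, Equiv.swap_apply_def]
  split_ifs <;> simp_all

lemma raiseAt_nonneg {n : ℕ} {a : Fin n → ℤ} {m : ℤ} {p : Fin n} (ha₀ : ∀ i, 0 ≤ a i)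
    (hm : 0 ≤ m) (k : Fin n) : 0 ≤ raiseAt a m p k := by
  have := ha₀ k
  simp only [raiseAt, Function.update_apply]
  split_ifs <;> omega

lemma monotone_raiseAt {n : ℕ} {a : Fin n → ℤ} {m : ℤ} {p : Fin n} (ha : Monotone a)
    (hup : ∀ k, p < k → m < a k) : Monotone (raiseAt a m p) := by
  intro i j hij
  have hle : raiseAt a m p i ≤ m + 1 := by
    simp only [raiseAt, Function.update_apply]
    split_ifs <;> omega
  rcases lt_or_ge j p with hj | hj
  · simp [raiseAt, hj.ne, (hij.trans_lt hj).ne, min_le_min (ha hij) le_rfl]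
  · refine hle.trans (le_of_eq ?_)
    rcases hj.eq_or_lt with rfl | hj
    · simp [raiseAt]
    · simpa [raiseAt, hj.ne'] using hup j hj

namespace LocalFieldData

variable {F : Type*} [Field F] (v : LocalFieldData F) {n : ℕ}

def ordVal : AddValuation F (WithTop ℤ) :=
  AddValuation.of v.ord v.ord_zero v.ord_one v.ord_add v.ord_mul

/-- The valuation `2 ord`, in which the half-integral bounds `(a_i + a_j)/2` of `𝓜(a)` and of
`G_a` become integral. -/
def twiceOrd : AddValuation F (WithTop ℤ) :=
  AddValuation.of (fun x => v.ord x + v.ord x) (by simp [v.ord_zero]) (by simp [v.ord_one])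
    (fun x y => (Monotone.map_min fun _ _ h => add_le_add h h).symm.trans_le
      (add_le_add (v.ord_add x y) (v.ord_add x y)))
    (fun x y => by rw [v.ord_mul]; abel)

@[simp] lemma ordVal_apply (x : F) : v.ordVal x = v.ord x := rfl

@[simp] lemma twiceOrd_apply (x : F) : v.twiceOrd x = v.ord x + v.ord x := rfl

lemma ne_zero_of_ord_eq_coe {x : F} {t : ℤ} (hx : v.ord x = t) : x ≠ 0 := by
  rintro rfl
  simp [v.ord_zero] at hx

lemma coe_le_ord_of_two_mul_sub_one_le {s : ℤ} {y : F}
    (h : ((2 * s - 1 : ℤ) : WithTop ℤ) ≤ v.twiceOrd y) : (s : WithTop ℤ) ≤ v.ord y := by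
  rw [twiceOrd_apply] at h
  generalize v.ord y = q at h ⊢
  induction q using WithTop.recTopCoe with
  | top => exact le_top
  | coe q => norm_cast at h ⊢; omega

lemma two_mul_le_twiceOrd {s : ℤ} {y : F} (h : (s : WithTop ℤ) ≤ v.ord y) :
    ((2 * s : ℤ) : WithTop ℤ) ≤ v.twiceOrd y :=
  WithTop.coe_le_add_of_le (two_mul s) h h

def integers : Subring F where
  carrier := {x | v.Integer x}
  mul_mem' {x y} hx hy := by
    simp only [Set.mem_ofPred_eq, Integer, v.ord_mul] at *
    exact add_nonneg hx hy
  one_mem' := v.ord_one.ge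
  add_mem' {x y} hx hy := le_trans (le_min hx hy) (v.ord_add x y)
  zero_mem' := by simp [Integer, v.ord_zero]
  neg_mem' {x} hx := by simpa [Integer, v.ord_neg] using hx

lemma mem_integers {x : F} : x ∈ v.integers ↔ v.Integer x := Iff.rfl

lemma integer_two : v.Integer (2 : F) := by
  rw [← mem_integers, show (2 : F) = 1 + 1 by norm_num]
  exact add_mem (one_mem _) (one_mem _)

lemma integer_of_eq_zero_or_eq_one {x : F} (hx : x = 0 ∨ x = 1) : v.Integer x := by
  rcases hx with rfl | rfl
  · exact zero_mem v.integers
  · exact one_mem v.integers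

section Unimodular

variable {v}

lemma IsUnimodular.det_ne_zero {U : Matrix (Fin n) (Fin n) F} (hU : v.IsUnimodular U) :
    U.det ≠ 0 := by
  intro h
  simpa [h, v.ord_zero] using hU.2

lemma IsUnimodular.mul {U W : Matrix (Fin n) (Fin n) F} (hU : v.IsUnimodular U)
    (hW : v.IsUnimodular W) : v.IsUnimodular (U * W) := by
  refine ⟨fun i j => ?_, by rw [det_mul, v.ord_mul, hU.2, hW.2, add_zero]⟩
  rw [mul_apply, ← mem_integers]
  exact sum_mem fun k _ => mul_mem (hU.1 i k) (hW.1 k j)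

lemma IsUnimodular.inv {U : Matrix (Fin n) (Fin n) F} (hU : v.IsUnimodular U) :
    v.IsUnimodular U⁻¹ := by
  have hdet : v.ord U.det⁻¹ = 0 := by
    rw [← v.ordVal_apply, AddValuation.map_inv, ordVal_apply, hU.2, neg_zero]
  obtain ⟨U', rfl⟩ : ∃ U' : Matrix (Fin n) (Fin n) v.integers, U = U'.map v.integers.subtype :=
    ⟨Matrix.of fun i j => ⟨U i j, hU.1 i j⟩, rfl⟩
  refine ⟨fun i j => ?_, by rwa [det_nonsing_inv, Ring.inverse_eq_inv']⟩
  rw [inv_def, Ring.inverse_eq_inv', Matrix.smul_apply, smul_eq_mul, ← RingHom.mapMatrix_apply,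
    ← RingHom.map_adjugate]
  exact mul_mem (v.mem_integers.2 hdet.ge) (Subtype.prop _)

end Unimodular

lemma isUnimodular_swap (i j : Fin n) : v.IsUnimodular (swap F i j) := by
  refine ⟨fun k l => v.integer_of_eq_zero_or_eq_one ?_, ?_⟩
  · simp only [swap, Equiv.Perm.permMatrix, PEquiv.toMatrix_apply]
    split_ifs <;> simp
  · rw [swap, det_permutation]
    rcases Int.units_eq_one_or (Equiv.Perm.sign (Equiv.swap i j)) with h | h <;>
      simp [h, v.ord_neg, v.ord_one]

lemma isUnimodular_one_updateCol {z : Fin n → F} {i : Fin n} (hz : ∀ k, v.Integer (z k))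
    (hzi : z i = 1) : v.IsUnimodular (updateCol (1 : Matrix (Fin n) (Fin n) F) i z) := by
  refine ⟨fun k l => ?_, ?_⟩
  · rw [updateCol_apply]
    split_ifs
    · exact hz k
    · exact v.integer_of_eq_zero_or_eq_one (by rw [one_apply]; split_ifs <;> simp)
  · rw [← cramer_apply, cramer_one, Module.End.one_apply, hzi, v.ord_one]

lemma conj_conj_inv {U : Matrix (Fin n) (Fin n) F} (hU : v.IsUnimodular U)
    (B : Matrix (Fin n) (Fin n) F) : (U⁻¹)ᵀ * (Uᵀ * B * U) * U⁻¹ = B := by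
  have h : IsUnit U.det := isUnit_iff_ne_zero.2 hU.det_ne_zero
  rw [show (U⁻¹)ᵀ * (Uᵀ * B * U) * U⁻¹ = (U * U⁻¹)ᵀ * B * (U * U⁻¹) by
      simp only [transpose_mul, Matrix.mul_assoc],
    mul_nonsing_inv _ h, transpose_one, Matrix.one_mul, Matrix.mul_one]

lemma memSS_conj_iff {U : Matrix (Fin n) (Fin n) F} (hU : v.IsUnimodular U)
    {B : Matrix (Fin n) (Fin n) F} {b : Fin n → ℤ} :
    v.MemSS (Uᵀ * B * U) b ↔ v.MemSS B b := by
  have conj_mul : ∀ C W X : Matrix (Fin n) (Fin n) F,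
      (W * X)ᵀ * C * (W * X) = Xᵀ * (Wᵀ * C * W) * X :=
    fun C W X => by simp only [transpose_mul, Matrix.mul_assoc]
  constructor
  · rintro ⟨W, hW, h⟩
    exact ⟨U * W, hU.mul hW, by rwa [conj_mul]⟩
  · rintro ⟨W, hW, h⟩
    exact ⟨U⁻¹ * W, hU.inv.mul hW, by rwa [conj_mul, v.conj_conj_inv hU]⟩

lemma isGK_conj_iff {U : Matrix (Fin n) (Fin n) F} (hU : v.IsUnimodular U)
    {B : Matrix (Fin n) (Fin n) F} {a : Fin n → ℤ} : v.IsGK (Uᵀ * B * U) a ↔ v.IsGK B a := by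
  simp only [IsGK, v.memSS_conj_iff hU]

lemma IsGK.unique {B : Matrix (Fin n) (Fin n) F} {a a' : Fin n → ℤ} (h : v.IsGK B a)
    (h' : v.IsGK B a') : a = a' :=
  lexLE_antisymm (h'.2 a h.1) (h.2 a' h'.1)

lemma isOptimal_conj_iff {U : Matrix (Fin n) (Fin n) F} (hU : v.IsUnimodular U)
    {B : Matrix (Fin n) (Fin n) F} {a : Fin n → ℤ} (hGK : v.IsGK B a) :
    v.IsOptimal (Uᵀ * B * U) ↔ v.MemS (Uᵀ * B * U) a := by
  refine ⟨fun ⟨a', hGK', hS⟩ => ?_, fun hS => ⟨a, (v.isGK_conj_iff hU).2 hGK, hS⟩⟩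
  rwa [hGK.unique v ((v.isGK_conj_iff hU).1 hGK')]

def weight (a : Fin n → ℤ) (x : Fin n → F) : WithTop ℤ :=
  Finset.univ.inf fun k => v.twiceOrd (x k) + a k

variable {a : Fin n → ℤ} {B : Matrix (Fin n) (Fin n) F}

lemma le_weight_iff {x : Fin n → F} {c : ℤ} :
    (c : WithTop ℤ) ≤ v.weight a x ↔ ∀ k, ((c - a k : ℤ) : WithTop ℤ) ≤ v.twiceOrd (x k) := by
  simp only [weight, Finset.le_inf_iff, Finset.mem_univ, true_implies,
    WithTop.coe_le_add_coe_iff]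

lemma le_weight_single (w : Fin n) : (a w : WithTop ℤ) ≤ v.weight a (Pi.single w 1) := by
  refine v.le_weight_iff.2 fun k => ?_
  rcases eq_or_ne k w with rfl | h
  · simp
  · simp [h]

lemma gCond_iff_le_weight {U : Matrix (Fin n) (Fin n) F} (hU : ∀ i j, v.Integer (U i j)) :
    v.GCond a U ↔ ∀ j, (a j : WithTop ℤ) ≤ v.weight a (Uᵀ j) := by
  simp only [le_weight_iff, transpose_apply, twiceOrd_apply]
  refine ⟨fun h j i => ?_, fun h i j _ => h j i⟩
  rcases lt_or_ge (a i) (a j) with hij | hij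
  · exact h i j hij
  · exact (WithTop.coe_le_coe.2 (by omega : a j - a i ≤ 0)).trans (add_nonneg (hU i j) (hU i j))

lemma le_twiceOrd_mul_two_mul_mul (hBM : v.MemM B a) {x y : Fin n → F} {c d : ℤ}
    (hx : (c : WithTop ℤ) ≤ v.weight a x) (hy : (d : WithTop ℤ) ≤ v.weight a y) (k l : Fin n) :
    ((c + d : ℤ) : WithTop ℤ) ≤ v.twiceOrd (x k * (2 * B k l) * y l) := by
  rw [AddValuation.map_mul, AddValuation.map_mul]
  exact WithTop.coe_le_add_of_le (q := d - a l) (by ring)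
    (WithTop.coe_le_add_of_le rfl (v.le_weight_iff.1 hx k) (hBM.2 k l)) (v.le_weight_iff.1 hy l)

lemma le_twiceOrd_two_mul_dotProduct_mulVec (hBM : v.MemM B a) {x y : Fin n → F} {c d : ℤ}
    (hx : (c : WithTop ℤ) ≤ v.weight a x) (hy : (d : WithTop ℤ) ≤ v.weight a y) :
    ((c + d : ℤ) : WithTop ℤ) ≤ v.twiceOrd (2 * (x ⬝ᵥ B *ᵥ y)) := by
  have h : 2 * (x ⬝ᵥ B *ᵥ y) = ∑ k, ∑ l, x k * (2 * B k l) * y l := by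
    simp only [dotProduct, mulVec, Finset.mul_sum]
    exact Finset.sum_congr rfl fun k _ => Finset.sum_congr rfl fun l _ => by ring
  rw [h]
  exact v.twiceOrd.map_le_sum fun k _ => v.twiceOrd.map_le_sum fun l _ =>
    v.le_twiceOrd_mul_two_mul_mul hBM hx hy k l

lemma le_twiceOrd_two_mul_vecMul_apply (hBM : v.MemM B a) {x : Fin n → F} {c : ℤ}
    (hx : (c : WithTop ℤ) ≤ v.weight a x) (w : Fin n) :
    ((c + a w : ℤ) : WithTop ℤ) ≤ v.twiceOrd (2 * (x ᵥ* B) w) := by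
  have h := v.le_twiceOrd_two_mul_dotProduct_mulVec hBM hx (v.le_weight_single w)
  rwa [dotProduct_mulVec, dotProduct_single_one] at h

lemma le_ord_dotProduct_mulVec_self (hBs : B.IsSymm) (hBM : v.MemM B a) {x : Fin n → F}
    {c : ℤ} (hx : (c : WithTop ℤ) ≤ v.weight a x) : (c : WithTop ℤ) ≤ v.ord (x ⬝ᵥ B *ᵥ x) := by
  have h : x ⬝ᵥ B *ᵥ x = ∑ k, x k * B k k * x k +
      ∑ k, ∑ l, if k < l then x k * (2 * B k l) * x l else 0 := by
    simp only [dotProduct, mulVec, Finset.mul_sum]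
    rw [sum_sum_eq_sum_add_sum_sum_lt]
    refine congrArg₂ (· + ·) (Finset.sum_congr rfl fun k _ => by ring)
      (Finset.sum_congr rfl fun k _ => Finset.sum_congr rfl fun l _ => ?_)
    rw [hBs.apply k l]
    split_ifs <;> ring
  rw [h, ← ordVal_apply]
  refine v.ordVal.map_le_add (v.ordVal.map_le_sum fun k _ => ?_)
    (v.ordVal.map_le_sum fun k _ => v.ordVal.map_le_sum fun l _ => ?_)
  · rw [AddValuation.map_mul, AddValuation.map_mul, add_right_comm]
    exact WithTop.coe_le_add_of_le (by ring) (v.le_weight_iff.1 hx k) (hBM.1 k)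
  · split_ifs
    · exact v.coe_le_ord_of_two_mul_sub_one_le
        ((WithTop.coe_le_coe.2 (by omega)).trans (v.le_twiceOrd_mul_two_mul_mul hBM hx hx k l))
    · simp

lemma memM_conj_of_le_weight (hBs : B.IsSymm) (hBM : v.MemM B a)
    {T : Matrix (Fin n) (Fin n) F} {b : Fin n → ℤ}
    (hT : ∀ j, (b j : WithTop ℤ) ≤ v.weight a (Tᵀ j)) : v.MemM (Tᵀ * B * T) b :=
  ⟨fun i => by
    rw [transpose_mul_mul_apply]
    exact v.le_ord_dotProduct_mulVec_self hBs hBM (hT i),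
  fun i j => by
    rw [transpose_mul_mul_apply]
    exact v.le_twiceOrd_two_mul_dotProduct_mulVec hBM (hT i) (hT j)⟩

lemma le_twiceOrd_two_mul_vecMul_col {T T' : Matrix (Fin n) (Fin n) F} (hTT' : T * T' = 1)
    (hC : v.MemM (Tᵀ * B * T) a) (j w : Fin n) {d : ℤ}
    (hd : (d : WithTop ℤ) ≤ v.weight a (T'ᵀ w)) :
    ((a j + d : ℤ) : WithTop ℤ) ≤ v.twiceOrd (2 * (Tᵀ j ᵥ* B) w) := by
  have h : (Tᵀ j ᵥ* B) w = Pi.single j 1 ⬝ᵥ (Tᵀ * B * T) *ᵥ T'ᵀ w := by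
    calc (Tᵀ j ᵥ* B) w = (Tᵀ * B * T * T') j w := by
          rw [Matrix.mul_assoc (Tᵀ * B), hTT', Matrix.mul_one, mul_apply_eq_vecMul]
      _ = _ := by rw [single_one_dotProduct]; rfl
  rw [h]
  exact v.le_twiceOrd_two_mul_dotProduct_mulVec hC (v.le_weight_single j) hd

lemma memM_swap_conj {C : Matrix (Fin n) (Fin n) F} {b : Fin n → ℤ} (h : v.MemM C b)
    (i j : Fin n) : v.MemM (swap F i j * C * swap F i j) (b ∘ Equiv.swap i j) := by
  have e : ∀ k l, (swap F i j * C * swap F i j) k l = C (Equiv.swap i j k) (Equiv.swap i j l) := by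
    simp [swap, Equiv.Perm.permMatrix, PEquiv.toMatrix_toPEquiv_mul, PEquiv.mul_toMatrix_toPEquiv]
  exact ⟨fun k => by rw [e]; exact h.1 _, fun k l => by rw [e]; exact h.2 _ _⟩

lemma memM_conj_one_updateCol (hBs : B.IsSymm) (hBM : v.MemM B a) {b : Fin n → ℤ}
    {i₀ : Fin n} {z : Fin n → F} (hba : ∀ j, j ≠ i₀ → b j ≤ a j)
    (hzz : (b i₀ : WithTop ℤ) ≤ v.ord (z ⬝ᵥ B *ᵥ z))
    (hzB : ∀ j, j ≠ i₀ → ((b i₀ + b j : ℤ) : WithTop ℤ) ≤ v.twiceOrd (2 * (z ᵥ* B) j)) :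
    v.MemM ((updateCol 1 i₀ z)ᵀ * B * updateCol 1 i₀ z) b := by
  have hcol : ∀ i, (updateCol (1 : Matrix (Fin n) (Fin n) F) i₀ z)ᵀ i =
      if i = i₀ then z else Pi.single i 1 := by
    intro i
    ext k
    by_cases hi : i = i₀ <;> simp [hi, one_apply, Pi.single_apply, eq_comm]
  have hsingle : ∀ i j, Pi.single i 1 ⬝ᵥ B *ᵥ Pi.single j (1 : F) = B i j := by
    intro i j
    simp [mulVec_single]
  have hzsingle : ∀ j, z ⬝ᵥ B *ᵥ Pi.single j 1 = (z ᵥ* B) j := by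
    intro j
    rw [dotProduct_mulVec, dotProduct_single_one]
  have hsinglez : ∀ i, Pi.single i 1 ⬝ᵥ B *ᵥ z = (z ᵥ* B) i := by
    intro i
    rw [single_one_dotProduct, ← vecMul_transpose, hBs.eq]
  refine ⟨fun i => ?_, fun i j => ?_⟩ <;> simp only [transpose_mul_mul_apply, hcol]
  · split_ifs with hi
    · exact hi ▸ hzz
    · rw [hsingle]
      exact (WithTop.coe_le_coe.2 (hba i hi)).trans (hBM.1 i)
  · split_ifs with hi hj hj
    · subst hi hj
      rw [← twiceOrd_apply, AddValuation.map_mul, ← two_mul]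
      exact WithTop.coe_le_add_of_le (zero_add _).symm
        (by simpa using add_nonneg v.integer_two v.integer_two) (v.two_mul_le_twiceOrd hzz)
    · rw [hzsingle]
      exact hi ▸ hzB j hj
    · rw [hsinglez, add_comm]
      exact hj ▸ hzB i hi
    · rw [hsingle]
      exact (WithTop.coe_le_coe.2 (by linarith [hba i hi, hba j hj])).trans (hBM.2 i j)

lemma le_ord_sub_dotProduct_mulVec_sub (hBs : B.IsSymm) (hBM : v.MemM B a) {x y : Fin n → F}
    {m : ℤ} (hxw : (m : WithTop ℤ) ≤ v.weight a x) (hy : ((m + 1 : ℤ) : WithTop ℤ) ≤ v.weight a y)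
    (hxx : ((m + 1 : ℤ) : WithTop ℤ) ≤ v.ord (x ⬝ᵥ B *ᵥ x)) :
    ((m + 1 : ℤ) : WithTop ℤ) ≤ v.ord ((x - y) ⬝ᵥ B *ᵥ (x - y)) := by
  have e : (x - y) ⬝ᵥ B *ᵥ (x - y) = x ⬝ᵥ B *ᵥ x - 2 * (x ⬝ᵥ B *ᵥ y) + y ⬝ᵥ B *ᵥ y := by
    have hyx : y ⬝ᵥ B *ᵥ x = x ⬝ᵥ B *ᵥ y := by
      rw [dotProduct_mulVec, dotProduct_comm, ← vecMul_transpose, hBs.eq]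
    simp only [sub_dotProduct, mulVec_sub, dotProduct_sub, hyx]
    ring
  rw [e, ← ordVal_apply]
  refine v.ordVal.map_le_add (v.ordVal.map_le_sub hxx ?_)
    (v.le_ord_dotProduct_mulVec_self hBs hBM hy)
  exact v.coe_le_ord_of_two_mul_sub_one_le ((WithTop.coe_le_coe.2 (by omega)).trans
    (v.le_twiceOrd_two_mul_dotProduct_mulVec hBM hxw hy))

lemma le_twiceOrd_two_mul_sub_vecMul_apply (hBM : v.MemM B a) {x y : Fin n → F} {m : ℤ}
    (hxw : (m : WithTop ℤ) ≤ v.weight a x) (hy : ((m + 1 : ℤ) : WithTop ℤ) ≤ v.weight a y)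
    (hxB : ∀ w, a w ≤ m → ((m + 1 + a w : ℤ) : WithTop ℤ) ≤ v.twiceOrd (2 * (x ᵥ* B) w))
    (w : Fin n) :
    ((m + 1 + min (a w) (m + 1) : ℤ) : WithTop ℤ) ≤ v.twiceOrd (2 * ((x - y) ᵥ* B) w) := by
  rw [sub_vecMul, Pi.sub_apply, mul_sub]
  refine v.twiceOrd.map_le_sub ?_ ((WithTop.coe_le_coe.2 (by omega)).trans
    (v.le_twiceOrd_two_mul_vecMul_apply hBM hy w))
  rcases le_or_gt (a w) m with hw | hw
  · exact (WithTop.coe_le_coe.2 (by omega)).trans (hxB w hw)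
  -- `2 ord` is even, so the odd lower bound `2m + 1` improves to `2m + 2`.
  · refine (WithTop.coe_le_coe.2 (by omega)).trans (v.two_mul_le_twiceOrd
      (s := m + 1) (v.coe_le_ord_of_two_mul_sub_one_le ?_))
    exact (WithTop.coe_le_coe.2 (by omega)).trans (v.le_twiceOrd_two_mul_vecMul_apply hBM hxw w)

lemma exists_isUnimodular_memM_raiseAt (hBs : B.IsSymm) (hBM : v.MemM B a) {x : Fin n → F}
    {i₀ : Fin n} (hx₁ : x i₀ = 1) (hxw : (a i₀ : WithTop ℤ) ≤ v.weight a x)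
    (hgap : ∀ k, a i₀ < a k → ((a i₀ + 1 - a k : ℤ) : WithTop ℤ) ≤ v.twiceOrd (x k))
    (hxx : ((a i₀ + 1 : ℤ) : WithTop ℤ) ≤ v.ord (x ⬝ᵥ B *ᵥ x))
    (hxB : ∀ w, a w ≤ a i₀ →
      ((a i₀ + 1 + a w : ℤ) : WithTop ℤ) ≤ v.twiceOrd (2 * (x ᵥ* B) w)) :
    ∃ W, v.IsUnimodular W ∧ v.MemM (Wᵀ * B * W) (raiseAt a (a i₀) i₀) := by
  set m := a i₀
  set y : Fin n → F := fun k => if a k ≤ m then 0 else x k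
  have hz : ∀ k, (x - y) k = if a k ≤ m then x k else 0 := by
    intro k
    by_cases hk : a k ≤ m <;> simp [y, hk]
  have hy : ((m + 1 : ℤ) : WithTop ℤ) ≤ v.weight a y := by
    refine v.le_weight_iff.2 fun k => ?_
    by_cases hk : a k ≤ m
    · simp [y, hk]
    · simpa [y, hk] using hgap k (not_le.1 hk)
  have hzint : ∀ k, v.Integer ((x - y) k) := by
    intro k
    rw [hz]
    split_ifs with hk
    · exact v.coe_le_ord_of_two_mul_sub_one_le
        ((WithTop.coe_le_coe.2 (by omega)).trans (v.le_weight_iff.1 hxw k))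
    · exact zero_mem v.integers
  refine ⟨updateCol 1 i₀ (x - y), v.isUnimodular_one_updateCol hzint (by simp [hz, m, hx₁]),
    v.memM_conj_one_updateCol hBs hBM (fun j hj => ?_) ?_ fun j hj => ?_⟩
  · simp [raiseAt, hj]
  · simpa [raiseAt] using v.le_ord_sub_dotProduct_mulVec_sub hBs hBM hxw hy hxx
  · simpa [raiseAt, hj] using v.le_twiceOrd_two_mul_sub_vecMul_apply hBM hxw hy hxB j

lemma exists_memSS_not_lexLE_of_memM_raiseAt (ha₀ : ∀ i, 0 ≤ a i) (ha : Monotone a)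
    {i₀ : Fin n} {W : Matrix (Fin n) (Fin n) F} (hW : v.IsUnimodular W)
    (hWM : v.MemM (Wᵀ * B * W) (raiseAt a (a i₀) i₀)) : ∃ b, v.MemSS B b ∧ ¬ lexLE b a := by
  set m := a i₀
  obtain ⟨p, hp, hpmax⟩ := Finset.exists_max_image (Finset.univ.filter fun k => a k ≤ m) id
    ⟨i₀, by simp [m]⟩
  simp only [Finset.mem_filter, Finset.mem_univ, true_and, id] at hp hpmax
  have hap : a p = m := le_antisymm hp (ha (hpmax i₀ le_rfl))
  have hup : ∀ k, p < k → m < a k := fun k hk => not_le.1 fun h => hk.not_ge (hpmax k h)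
  refine ⟨raiseAt a m p, ⟨W * swap F i₀ p, hW.mul (v.isUnimodular_swap i₀ p),
    raiseAt_nonneg ha₀ (ha₀ i₀), monotone_raiseAt ha hup, ?_⟩,
    not_lexLE_of_eq_of_lt (p := p) (fun i hi => ?_) (by simp [raiseAt, hap])⟩
  · rw [← raiseAt_comp_swap (m := m) (hap.symm : a i₀ = a p), transpose_mul, transpose_swap,
      show swap F i₀ p * Wᵀ * B * (W * swap F i₀ p) = swap F i₀ p * (Wᵀ * B * W) * swap F i₀ p by
        simp only [Matrix.mul_assoc]]
    exact v.memM_swap_conj hWM i₀ p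
  · have := ha hi.le
    simpa [raiseAt, hi.ne] using (by omega : a i ≤ m + 1)

lemma exists_eq_weight_of_max {x : Fin n → F} {c : ℤ} (hc : v.weight a x = c) :
    ∃ i, v.twiceOrd (x i) = ((c - a i : ℤ) : WithTop ℤ) ∧
      ∀ k, a i < a k → ((c + 1 - a k : ℤ) : WithTop ℤ) ≤ v.twiceOrd (x k) := by
  have hne : (Finset.univ : Finset (Fin n)).Nonempty := by
    by_contra h
    simp [weight, Finset.not_nonempty_iff_eq_empty.1 h] at hc
  obtain ⟨k₀, -, hk₀⟩ := Finset.exists_mem_eq_inf _ hne fun k => v.twiceOrd (x k) + a k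
  have hk₀' : v.twiceOrd (x k₀) = ((c - a k₀ : ℤ) : WithTop ℤ) := by
    have h := hc.symm.trans hk₀
    generalize v.twiceOrd (x k₀) = q at h ⊢
    induction q using WithTop.recTopCoe with
    | top => simp at h
    | coe q => norm_cast at h ⊢; omega
  obtain ⟨i, hi, hmax⟩ := Finset.exists_max_image
    (Finset.univ.filter fun k => v.twiceOrd (x k) = ((c - a k : ℤ) : WithTop ℤ)) a
    ⟨k₀, Finset.mem_filter.2 ⟨Finset.mem_univ _, hk₀'⟩⟩
  simp only [Finset.mem_filter, Finset.mem_univ, true_and] at hi hmax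
  refine ⟨i, hi, fun k hk => ?_⟩
  have hlt : ((c - a k : ℤ) : WithTop ℤ) < v.twiceOrd (x k) :=
    (v.le_weight_iff.1 hc.ge k).lt_of_ne fun h => (hmax k h.symm).not_gt hk
  simpa [sub_add_eq_add_sub] using WithTop.coe_add_one_le_of_lt hlt

lemma exists_memSS_not_lexLE (ha₀ : ∀ i, 0 ≤ a i) (ha : Monotone a) (hBs : B.IsSymm)
    (hBM : v.MemM B a) {x : Fin n → F} (hx : ∀ k, v.Integer (x k)) {c : ℤ}
    (hc : v.weight a x = c) (hxx : ((c + 1 : ℤ) : WithTop ℤ) ≤ v.ord (x ⬝ᵥ B *ᵥ x))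
    (hxB : ∀ w, a w ≤ c → ((c + 1 + a w : ℤ) : WithTop ℤ) ≤ v.twiceOrd (2 * (x ᵥ* B) w)) :
    ∃ b, v.MemSS B b ∧ ¬ lexLE b a := by
  obtain ⟨i₀, hi₀, hgap⟩ := v.exists_eq_weight_of_max hc
  obtain ⟨t, ht⟩ : ∃ t : ℤ, v.ord (x i₀) = t := by
    refine (WithTop.ne_top_iff_exists.1 fun h => ?_).imp fun _ h => h.symm
    rw [twiceOrd_apply, h, top_add] at hi₀
    exact WithTop.top_ne_coe hi₀
  have hct : c - a i₀ = 2 * t := by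
    rw [twiceOrd_apply, ht] at hi₀
    norm_cast at hi₀
    omega
  have ht₀ : 0 ≤ t := by
    have h := hx i₀
    rw [Integer, ht] at h
    exact_mod_cast h
  have htwice : v.twiceOrd (x i₀) = ((2 * t : ℤ) : WithTop ℤ) := by rw [hi₀, hct]
  obtain ⟨W, hW, hWM⟩ := v.exists_isUnimodular_memM_raiseAt hBs hBM (x := (x i₀)⁻¹ • x)
    (i₀ := i₀) (by simp [v.ne_zero_of_ord_eq_coe ht])
    (v.le_weight_iff.2 fun k => v.twiceOrd.coe_le_map_inv_mul htwice
      ((WithTop.coe_le_coe.2 (by omega)).trans (v.le_weight_iff.1 hc.ge k)))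
    (fun k hk => v.twiceOrd.coe_le_map_inv_mul htwice
      ((WithTop.coe_le_coe.2 (by omega)).trans (hgap k hk)))
    (by
      rw [smul_dotProduct, mulVec_smul, dotProduct_smul, smul_eq_mul, smul_eq_mul, ← ordVal_apply]
      exact v.ordVal.coe_le_map_inv_mul ht (v.ordVal.coe_le_map_inv_mul ht
        ((WithTop.coe_le_coe.2 (by omega)).trans hxx)))
    (fun w hw => by
      rw [smul_vecMul, Pi.smul_apply, smul_eq_mul, mul_left_comm]
      exact v.twiceOrd.coe_le_map_inv_mul htwice
        ((WithTop.coe_le_coe.2 (by omega)).trans (hxB w (by omega))))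
  exact v.exists_memSS_not_lexLE_of_memM_raiseAt ha₀ ha hW hWM

lemma exists_lt_weight_of_lt (ha₀ : ∀ i, 0 ≤ a i) (ha : Monotone a) (hBs : B.IsSymm)
    (hBM : v.MemM B a) (hmax : ∀ b, v.MemSS B b → lexLE b a) {T T' : Matrix (Fin n) (Fin n) F}
    (hT : ∀ i j, v.Integer (T i j)) (hTT' : T * T' = 1) (hC : v.MemM (Tᵀ * B * T) a)
    {j : Fin n} (hj : v.weight a (Tᵀ j) < a j) :
    ∃ w, v.weight a (T'ᵀ w) < a w ∧ v.weight a (T'ᵀ w) < v.weight a (Tᵀ j) := by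
  by_contra! h
  obtain ⟨c, hc⟩ := WithTop.ne_top_iff_exists.1 hj.ne_top
  have hcj : c + 1 ≤ a j := by
    rw [← hc] at hj
    exact_mod_cast hj
  have hxB : ∀ w, a w ≤ c →
      ((c + 1 + a w : ℤ) : WithTop ℤ) ≤ v.twiceOrd (2 * (Tᵀ j ᵥ* B) w) := by
    intro w hw
    have hd : (a w : WithTop ℤ) ≤ v.weight a (T'ᵀ w) := by
      by_contra! hlt
      exact hlt.not_ge ((WithTop.coe_le_coe.2 hw).trans (hc ▸ h w hlt))
    exact (WithTop.coe_le_coe.2 (by omega)).trans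
      (v.le_twiceOrd_two_mul_vecMul_col hTT' hC j w hd)
  obtain ⟨b, hb, hlex⟩ := v.exists_memSS_not_lexLE ha₀ ha hBs hBM (x := Tᵀ j) (fun k => hT k j)
    hc.symm (by rw [← transpose_mul_mul_apply]; exact (WithTop.coe_le_coe.2 hcj).trans (hC.1 j))
    hxB
  exact hlex (hmax b hb)

lemma le_weight_of_memM_conj (hBs : B.IsSymm) (hS : v.MemS B a) (hGK : v.IsGK B a)
    {U : Matrix (Fin n) (Fin n) F} (hU : v.IsUnimodular U) (hC : v.MemM (Uᵀ * B * U) a)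
    (j : Fin n) : (a j : WithTop ℤ) ≤ v.weight a (Uᵀ j) := by
  have hdet : IsUnit U.det := isUnit_iff_ne_zero.2 hU.det_ne_zero
  have hCs : (Uᵀ * B * U).IsSymm := by
    rw [IsSymm, transpose_mul, transpose_mul, transpose_transpose, hBs.eq, Matrix.mul_assoc]
  refine not_lt.1 (not_of_alternating_descent (p := fun j => v.weight a (Uᵀ j) < a j)
    (q := fun w => v.weight a (U⁻¹ᵀ w) < a w) (f := fun j => v.weight a (Uᵀ j))
    (g := fun w => v.weight a (U⁻¹ᵀ w)) (fun j hj => ?_) (fun w hw => ?_) j)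
  · exact v.exists_lt_weight_of_lt hS.1 hS.2.1 hBs hS.2.2 hGK.2 hU.1 (mul_nonsing_inv U hdet) hC hj
  · exact v.exists_lt_weight_of_lt hS.1 hS.2.1 hCs hC ((v.isGK_conj_iff hU).2 hGK).2 hU.inv.1
      (nonsing_inv_mul U hdet) (by rw [v.conj_conj_inv hU]; exact hS.2.2) hw

end LocalFieldData

theorem optimal_transform_iff_mem_G_general {F : Type*} [Field F] (v : LocalFieldData F) {n : ℕ}
    (B : Matrix (Fin n) (Fin n) F) (hB : v.IsHalfIntegral B)
    (a : Fin n → ℤ) (hGK : v.IsGK B a) (hopt : v.MemS B a)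
    (U : Matrix (Fin n) (Fin n) F) (hU : v.IsUnimodular U) :
    v.IsOptimal (Uᵀ * B * U) ↔ v.GCond a U := by
  rw [v.isOptimal_conj_iff hU hGK, v.gCond_iff_le_weight hU.1]
  exact ⟨fun hS => v.le_weight_of_memM_conj hB.1 hopt hGK hU hS.2.2,
    fun h => ⟨hopt.1, hopt.2.1, v.memM_conj_of_le_weight hB.1 hopt.2.2 h⟩⟩

/-- **Theorem 1.2.** Suppose `B ∈ ℋ_n(𝔬)^nd` is optimal with `GK(B) = a`, and let
`U ∈ GL_n(𝔬)`. Then `B[U]` is optimal if and only if `U ∈ G_a`. -/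
theorem optimal_transform_iff_mem_G {F : Type*} [Field F] [CharZero F] (v : LocalFieldData F) {n : ℕ}
    (B : Matrix (Fin n) (Fin n) F) (hB : v.IsHalfIntegral B) (hnd : B.det ≠ 0)
    (a : Fin n → ℤ) (hGK : v.IsGK B a) (hopt : v.MemS B a)
    (U : Matrix (Fin n) (Fin n) F) (hU : v.IsUnimodular U) :
    v.IsOptimal (Uᵀ * B * U) ↔ v.GCond a U :=
  optimal_transform_iff_mem_G_general v B hB a hGK hopt U hU

end
end

section
/- If H = (a₁,…,a_n; ε₁,…,ε_n) is a naive EGK datum of length n, then Υ(H) = (n₁,…,n_r; m₁,…,m_r; ζ₁,…,ζ_r) is an EGK datum of length n. -/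
open Matrix
open scoped Classical

noncomputable section

open Finset

/-!
Extend `a` and `ε` by zero to sequences on `ℕ`, so that position `q` is the paper's index `q + 1`,
and let `P q = a₀ + ⋯ + a_{q-1}`. For even `q` with `P (q + 2)` even, (N5) reads
`ε_{q+2} = ε_q · ε_{q+1} ^ (a_{q+1} + a_{q+2})`. If `q + 1` and `q + 2` lie in the same block, the
exponent is even and `ε_{q+1} = ±1` by (N2), so the factor is `1`; if `q + 2` starts block `u + 1`,
the factor is `ζ_u ^ (m_u + m_{u+1})`. Between two consecutive odd block boundaries `P` has constant
parity at even positions, so these steps telescope: from position `0`, where `ε = 1`, to the end of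
the first odd block this gives (E3)(a); from the end of block `t` to the end of block `s` it gives
(E3)(b). (E2) and `ζ_s ≠ 0` in (E3) are (N2) and (N3) at the last position of a block.
-/

def extendByZero {α : Type*} [Zero α] {n : ℕ} (f : Fin n → α) (q : ℕ) : α :=
  if h : q < n then f ⟨q, h⟩ else 0

section extendByZero

variable {α : Type*} [Zero α] {n : ℕ}

theorem extendByZero_of_lt (f : Fin n → α) {q : ℕ} (hq : q < n) :
    extendByZero f q = f ⟨q, hq⟩ :=
  dif_pos hq

theorem extendByZero_val (f : Fin n → α) (i : Fin n) : extendByZero f i = f i :=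
  extendByZero_of_lt f i.isLt

theorem sum_filter_val_lt_eq_sum_range {M : Type*} [AddCommMonoid M] (f : Fin n → M) {k : ℕ}
    (hk : k ≤ n) :
    ∑ j ∈ univ.filter (fun j : Fin n => (j : ℕ) < k), f j = ∑ i ∈ range k, extendByZero f i := by
  simp_rw [sum_filter, ← extendByZero_val f]
  rw [Fin.sum_univ_eq_sum_range (fun i => if i < k then extendByZero f i else 0), ← sum_filter]
  congr 1
  ext i
  simp only [mem_filter, mem_range]
  omega

end extendByZero

theorem even_sum_range_add_two_mul_iff (A : ℕ → ℤ) (c k : ℕ)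
    (h : ∀ j < k, A (c + 2 * j) = A (c + 2 * j + 1)) :
    Even (∑ i ∈ range (c + 2 * k), A i) ↔ Even (∑ i ∈ range c, A i) := by
  induction k with
  | zero => simp
  | succ k ih =>
    rw [show c + 2 * (k + 1) = c + 2 * k + 1 + 1 by ring, sum_range_succ, sum_range_succ,
      add_assoc, ← h k k.lt_succ_self, ← two_mul, Int.even_add, iff_true_right (even_two_mul _),
      ih fun j hj => h j (by omega)]

namespace IsNaiveEGK

variable {n : ℕ} {a ε : Fin n → ℤ}

theorem extendByZero_nonneg (h : IsNaiveEGK n a ε) (q : ℕ) : 0 ≤ extendByZero a q := by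
  unfold extendByZero
  split_ifs
  exacts [h.1 _, le_rfl]

theorem eps_mem (h : IsNaiveEGK n a ε) (q : ℕ) :
    extendByZero ε q = 0 ∨ extendByZero ε q = 1 ∨ extendByZero ε q = -1 := by
  unfold extendByZero
  split_ifs
  exacts [h.2.2.1 _, Or.inl rfl]

theorem eps_pow_eq_one (h : IsNaiveEGK n a ε) {q m : ℕ} (hq : extendByZero ε q ≠ 0)
    (hm : Even m) : extendByZero ε q ^ m = 1 := by
  rcases h.eps_mem q with h0 | h1 | h1
  exacts [absurd h0 hq, by rw [h1, one_pow], by rw [h1, hm.neg_one_pow]]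

theorem eps_ne_zero_iff (h : IsNaiveEGK n a ε) {q : ℕ} (hq : q < n) (hodd : Odd q) :
    extendByZero ε q ≠ 0 ↔ Even (∑ i ∈ range (q + 1), extendByZero a i) := by
  have := h.2.2.2.1 ⟨q, hq⟩ (by simpa [Nat.even_add_one] using hodd)
  simp_rw [Fin.le_def, ← Nat.lt_succ_iff, sum_filter_val_lt_eq_sum_range a hq] at this
  rwa [extendByZero_of_lt ε hq]

theorem eps_ne_zero (h : IsNaiveEGK n a ε) {q : ℕ} (hq : q < n) (heven : Even q) :
    extendByZero ε q ≠ 0 := by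
  rw [extendByZero_of_lt ε hq]
  exact h.2.2.2.2.1 ⟨q, hq⟩ (by simpa [Nat.even_add_one] using heven)

theorem eps_zero (h : IsNaiveEGK n a ε) (hn : 0 < n) : extendByZero ε 0 = 1 := by
  rw [extendByZero_of_lt ε hn]
  exact h.2.2.2.2.2.1 hn

theorem eps_add_two (h : IsNaiveEGK n a ε) {q : ℕ} (hq : q + 2 < n) (heven : Even q)
    (hP : Even (∑ i ∈ range (q + 2), extendByZero a i)) :
    extendByZero ε (q + 2) = extendByZero ε q *
      extendByZero ε (q + 1) ^ (extendByZero a (q + 2) + extendByZero a (q + 1)).toNat := by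
  have := h.2.2.2.2.2.2 ⟨q + 2, hq⟩ (by simp) (by simpa [Nat.even_add_one] using heven)
    (by simpa [Fin.lt_def, sum_filter_val_lt_eq_sum_range a hq.le] using hP)
    (by omega) (by omega)
  simpa [extendByZero_of_lt, hq, show q < n by omega, show q + 1 < n by omega] using this

theorem eps_add_two_of_eq (h : IsNaiveEGK n a ε) {q : ℕ} (hq : q + 2 < n) (heven : Even q)
    (hP : Even (∑ i ∈ range (q + 2), extendByZero a i))
    (ha : extendByZero a (q + 1) = extendByZero a (q + 2)) :
    extendByZero ε (q + 2) = extendByZero ε q := by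
  have hne : extendByZero ε (q + 1) ≠ 0 :=
    (h.eps_ne_zero_iff (by omega) heven.add_one).2 hP
  rw [h.eps_add_two hq heven hP, ha,
    h.eps_pow_eq_one hne ⟨(extendByZero a (q + 2)).toNat, by omega⟩, mul_one]

end IsNaiveEGK

namespace BlocksOf

variable {n r : ℕ} {a : Fin n → ℤ} {Ns : ℕ → ℕ} {ms : ℕ → ℤ}

theorem strictMonoOn (hB : BlocksOf a r Ns ms) : StrictMonoOn Ns (Set.Iic r) :=
  strictMonoOn_Iic_of_lt_succ fun m hm => by simpa using hB.2.2.1 m hm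

theorem lt_iff_lt (hB : BlocksOf a r Ns ms) {u v : ℕ} (hu : u ≤ r) (hv : v ≤ r) :
    Ns u < Ns v ↔ u < v :=
  hB.strictMonoOn.lt_iff_lt hu hv

theorem le_iff_le (hB : BlocksOf a r Ns ms) {u v : ℕ} (hu : u ≤ r) (hv : v ≤ r) :
    Ns u ≤ Ns v ↔ u ≤ v :=
  hB.strictMonoOn.le_iff_le hu hv

theorem le_of_le_of_lt (hB : BlocksOf a r Ns ms) {u v q : ℕ} (hu : u ≤ r) (hv : v < r)
    (h₁ : Ns u ≤ q) (h₂ : q < Ns (v + 1)) : u ≤ v :=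
  Nat.lt_succ_iff.1 <| (hB.lt_iff_lt hu hv).1 (h₁.trans_lt h₂)

theorem le_length (hB : BlocksOf a r Ns ms) {s : ℕ} (hs : s ≤ r) : Ns s ≤ n :=
  hB.2.1 ▸ (hB.le_iff_le hs le_rfl).2 hs

theorem extendByZero_eq (hB : BlocksOf a r Ns ms) {s q : ℕ} (hs : s < r) (h₁ : Ns s ≤ q)
    (h₂ : q < Ns (s + 1)) : extendByZero a q = ms s := by
  have hq : q < n := h₂.trans_le (hB.le_length hs)
  rw [extendByZero_of_lt a hq]
  exact hB.2.2.2.1 s hs _ h₁ h₂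

theorem exists_mem_block (hB : BlocksOf a r Ns ms) {q : ℕ} (hq : q < n) :
    ∃ s < r, Ns s ≤ q ∧ q < Ns (s + 1) := by
  have h₁ := Nat.findGreatest_spec (P := fun s => Ns s ≤ q) r.zero_le (by simp [hB.1])
  have h₂ := Nat.findGreatest_is_greatest (P := fun s => Ns s ≤ q) (n := r) (Nat.lt_succ_self _)
  have hle := Nat.findGreatest_le (P := fun s => Ns s ≤ q) r
  generalize Nat.findGreatest (fun s => Ns s ≤ q) r = s at h₁ h₂ hle
  have hs : s < r := hle.lt_of_ne fun he => by
    rw [he, hB.2.1] at h₁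
    omega
  exact ⟨s, hs, h₁, not_le.1 (h₂ hs)⟩

theorem extendByZero_succ_eq (hB : BlocksOf a r Ns ms) {q : ℕ} (hq : q + 1 < n)
    (hbd : ∀ u ≤ r, Ns u ≠ q + 1) : extendByZero a (q + 1) = extendByZero a q := by
  obtain ⟨s, hs, h₁, h₂⟩ := hB.exists_mem_block hq
  have := hbd s hs.le
  rw [hB.extendByZero_eq hs h₁ h₂, hB.extendByZero_eq hs (by omega) (by omega)]

theorem even_sum_range_iff (hB : BlocksOf a r Ns ms) {c k : ℕ} (hc : Even c)
    (hk : c + 2 * k ≤ n) (hbd : ∀ u ≤ r, c < Ns u → Ns u ≤ c + 2 * k → Even (Ns u)) :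
    Even (∑ i ∈ range (c + 2 * k), extendByZero a i) ↔
      Even (∑ i ∈ range c, extendByZero a i) := by
  refine even_sum_range_add_two_mul_iff _ c k fun j hj =>
    (hB.extendByZero_succ_eq (by omega) fun u hu he => ?_).symm
  have := hbd u hu (by omega) (by omega)
  rw [he, Nat.even_add_one] at this
  exact this (hc.add (even_two_mul j))

theorem sum_Ico_eq (hB : BlocksOf a r Ns ms) {s q : ℕ} (hs : s < r) (h₁ : Ns s ≤ q)
    (h₂ : q ≤ Ns (s + 1)) :
    ∑ i ∈ Ico (Ns s) q, extendByZero a i = ms s * ((q : ℤ) - Ns s) := by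
  rw [sum_congr rfl fun i hi =>
      hB.extendByZero_eq hs (mem_Ico.1 hi).1 ((mem_Ico.1 hi).2.trans_le h₂),
    sum_const, Nat.card_Ico, nsmul_eq_mul, mul_comm, Nat.cast_sub h₁]

theorem sum_range_boundary (hB : BlocksOf a r Ns ms) {s : ℕ} (hs : s ≤ r) :
    ∑ i ∈ range (Ns s), extendByZero a i =
      ∑ u ∈ range s, ms u * ((Ns (u + 1) : ℤ) - Ns u) := by
  induction s with
  | zero => simp [hB.1]
  | succ s ih =>
    have hlt := hB.2.2.1 s hs
    rw [← sum_range_add_sum_Ico _ hlt.le, ih (by omega), hB.sum_Ico_eq hs hlt.le le_rfl,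
      sum_range_succ]

theorem sum_range_eq (hB : BlocksOf a r Ns ms) {s q : ℕ} (hs : s < r) (h₁ : Ns s ≤ q)
    (h₂ : q ≤ Ns (s + 1)) :
    ∑ i ∈ range q, extendByZero a i =
      ∑ u ∈ range s, ms u * ((Ns (u + 1) : ℤ) - Ns u) + ms s * ((q : ℤ) - Ns s) := by
  rw [← sum_range_add_sum_Ico _ h₁, hB.sum_range_boundary hs.le, hB.sum_Ico_eq hs h₁ h₂]

end BlocksOf

namespace UpsilonRel

variable {n r : ℕ} {a ε : Fin n → ℤ} {Ns : ℕ → ℕ} {ms zs : ℕ → ℤ}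

theorem zs_eq (hU : UpsilonRel n a ε r Ns ms zs) {s : ℕ} (hs : s < r) :
    zs s = extendByZero ε (Ns (s + 1) - 1) := by
  have hlt := hU.1.2.2.1 s hs
  have hp : Ns (s + 1) - 1 < n := by have := hU.1.le_length (show s + 1 ≤ r from hs); omega
  rw [extendByZero_of_lt ε hp]
  exact hU.2 s hs hp

theorem eps_add_two_eq_mul_prod (hU : UpsilonRel n a ε r Ns ms zs) (hN : IsNaiveEGK n a ε)
    {q v₀ v : ℕ} (hq : q + 2 < n) (heven : Even q)
    (hP : Even (∑ i ∈ range (q + 2), extendByZero a i))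
    (hv₀ : v₀ < r) (h₀ : Ns v₀ ≤ q + 1) (h₀' : q + 1 < Ns (v₀ + 1))
    (hv : v < r) (h : Ns v ≤ q + 2) (h' : q + 2 < Ns (v + 1)) :
    extendByZero ε (q + 2) =
      extendByZero ε q * ∏ u ∈ Ico v₀ v, zs u ^ (ms u + ms (u + 1)).toNat := by
  have hB := hU.1
  rcases (hB.le_of_le_of_lt hv₀.le hv (by omega) h').eq_or_lt with rfl | hlt
  · rw [Ico_self, prod_empty, mul_one]
    exact hN.eps_add_two_of_eq hq heven hP <| by
      rw [hB.extendByZero_eq hv₀ h₀ h₀', hB.extendByZero_eq hv₀ (by omega) h']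
  · have hbd : Ns (v₀ + 1) = q + 2 :=
      le_antisymm (((hB.le_iff_le (hv₀ : v₀ + 1 ≤ r) hv.le).2 hlt).trans h) (by omega)
    obtain rfl : v = v₀ + 1 :=
      le_antisymm ((hB.le_iff_le hv.le (hv₀ : v₀ + 1 ≤ r)).1 (hbd ▸ h)) hlt
    rw [hN.eps_add_two hq heven hP, Nat.Ico_succ_singleton, prod_singleton, hU.zs_eq hv₀, hbd,
      hB.extendByZero_eq hv (by omega) h', hB.extendByZero_eq hv₀ (by omega) (by omega),
      add_comm (ms (v₀ + 1))]
    rfl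

/-- The product starts at the block of `c + 1` rather than that of `c`, so that `c` may be the last
position before an odd boundary, as in (E3)(b). -/
theorem eps_eq_mul_prod (hU : UpsilonRel n a ε r Ns ms zs) (hN : IsNaiveEGK n a ε)
    {c w : ℕ} (hc : Even c) (hw : w < r) (hw₁ : Ns w ≤ c + 1) (hw₂ : c + 1 < Ns (w + 1))
    (k : ℕ) {v : ℕ} (hv : v < r) (h₁ : Ns v ≤ c + 2 * k + 2) (h₂ : c + 2 * k + 2 < Ns (v + 1))
    (hP : ∀ j ≤ k, Even (∑ i ∈ range (c + 2 * j + 2), extendByZero a i))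
    (hbd : ∀ u ≤ r, c + 1 < Ns u → Ns u ≤ c + 2 * k + 2 → Even (Ns u)) :
    extendByZero ε (c + 2 * k + 2) =
      extendByZero ε c * ∏ u ∈ Ico w v, zs u ^ (ms u + ms (u + 1)).toNat := by
  have hB := hU.1
  have hn : c + 2 * k + 2 < n := h₂.trans_le (hB.le_length (show v + 1 ≤ r from hv))
  induction k generalizing v with
  | zero => exact hU.eps_add_two_eq_mul_prod hN hn hc (hP 0 le_rfl) hw hw₁ hw₂ hv h₁ h₂
  | succ k ih =>
    set q := c + 2 * k + 2
    obtain ⟨v₀, hv₀, h₀, h₀'⟩ := hB.exists_mem_block (show q + 1 < n by omega)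
    have hq : Ns v₀ ≠ q + 1 := fun he => by
      have := hbd v₀ hv₀.le (by omega) (by omega)
      rw [he, Nat.even_add_one] at this
      exact this (hc.add (even_two_mul k) |>.add even_two)
    have hwv₀ : w ≤ v₀ := hB.le_of_le_of_lt hw.le hv₀ (by omega) h₀'
    have hv₀v : v₀ ≤ v := hB.le_of_le_of_lt hv₀.le hv (by omega) h₂
    rw [show c + 2 * (k + 1) + 2 = q + 2 by ring,
      hU.eps_add_two_eq_mul_prod hN (by omega) (hc.add (even_two_mul k) |>.add even_two)
        (hP (k + 1) le_rfl) hv₀ h₀ h₀' hv (by omega) (by omega),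
      ih hv₀ (by omega) (by omega) (fun j hj => hP j (by omega))
        (fun u hu h h' => hbd u hu h (by omega)) (by omega),
      mul_assoc, prod_Ico_consecutive _ hwv₀ hv₀v]

theorem zs_ne_zero_iff (hU : UpsilonRel n a ε r Ns ms zs) (hN : IsNaiveEGK n a ε) {s : ℕ}
    (hs : s < r) (heven : Even (Ns (s + 1))) :
    zs s ≠ 0 ↔ Even (∑ u ∈ range (s + 1), ms u * ((Ns (u + 1) : ℤ) - Ns u)) := by
  have hpos : 0 < Ns (s + 1) := (Nat.zero_le _).trans_lt (hU.1.2.2.1 s hs)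
  have hlen := hU.1.le_length (show s + 1 ≤ r from hs)
  rw [hU.zs_eq hs, hN.eps_ne_zero_iff (by omega) (by grind),
    Nat.sub_add_cancel hpos, hU.1.sum_range_boundary hs]

theorem zs_ne_zero (hU : UpsilonRel n a ε r Ns ms zs) (hN : IsNaiveEGK n a ε) {s : ℕ}
    (hs : s < r) (hodd : ¬Even (Ns (s + 1))) : zs s ≠ 0 := by
  have hpos : 0 < Ns (s + 1) := (Nat.zero_le _).trans_lt (hU.1.2.2.1 s hs)
  have hlen := hU.1.le_length (show s + 1 ≤ r from hs)
  rw [hU.zs_eq hs]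
  exact hN.eps_ne_zero (by omega) (by grind)

theorem zs_eq_prod_of_forall_even (hU : UpsilonRel n a ε r Ns ms zs) (hN : IsNaiveEGK n a ε)
    {s : ℕ} (hs : s < r) (hodd : ¬Even (Ns (s + 1))) (heven : ∀ i < s, Even (Ns (i + 1))) :
    zs s = ∏ u ∈ range s, zs u ^ (ms u + ms (u + 1)).toNat := by
  have hB := hU.1
  have hlt := hB.2.2.1 s hs
  have hlen := hB.le_length (show s + 1 ≤ r from hs)
  have hbd : ∀ u ≤ r, Ns u < Ns (s + 1) → Even (Ns u) := by
    intro u hu hu'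
    have := hB.le_of_le_of_lt hu hs le_rfl hu'
    rcases u with _ | i
    · rw [hB.1]
      exact Even.zero
    · exact heven i (by omega)
  rw [hU.zs_eq hs]
  obtain hp | ⟨k, hk⟩ : Ns (s + 1) = 1 ∨ ∃ k, Ns (s + 1) - 1 = 0 + 2 * k + 2 := by
    rcases Nat.even_or_odd' (Ns (s + 1)) with ⟨m, hm | hm⟩
    · exact absurd ⟨m, by omega⟩ hodd
    · rcases m with _ | k
      exacts [Or.inl hm, Or.inr ⟨k, by omega⟩]
  · obtain rfl : s = 0 := hB.strictMonoOn.injOn hs.le r.zero_le (by rw [hB.1]; omega)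
    rw [hp, range_zero, prod_empty, Nat.sub_self, hN.eps_zero (by omega)]
  · have h₁ : 1 < Ns 1 := by
      have h01 : Ns 0 < Ns 1 := hB.2.2.1 0 (by omega)
      rw [hB.1] at h01
      by_contra! hle
      rcases Nat.eq_zero_or_pos s with rfl | hs0
      · simp only [zero_add] at hk
        omega
      · have h1 := heven 0 hs0
        rw [zero_add, show Ns 1 = 1 by omega] at h1
        exact absurd h1 (by decide)
    have hP : ∀ j ≤ k, Even (∑ i ∈ range (0 + 2 * j + 2), extendByZero a i) := fun j hj => by
      rw [show 0 + 2 * j + 2 = 0 + 2 * (j + 1) by ring, hB.even_sum_range_iff Even.zero (by omega)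
        fun u hu _ h => hbd u hu (by omega)]
      simp
    rw [hk, hU.eps_eq_mul_prod hN Even.zero (by omega) (by rw [hB.1]; omega) h₁ k hs (by omega)
      (by omega) hP fun u hu _ h => hbd u hu (by omega), hN.eps_zero (by omega), one_mul,
      range_eq_Ico]

theorem zs_eq_mul_prod_of_odd (hU : UpsilonRel n a ε r Ns ms zs) (hN : IsNaiveEGK n a ε)
    {s t : ℕ} (hs : s < r) (hts : t < s) (hodd : ¬Even (Ns (s + 1)))
    (htodd : ¬Even (Ns (t + 1))) (heven : ∀ i, t < i → i < s → Even (Ns (i + 1)))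
    (hP : Even (∑ u ∈ range s, ms u * ((Ns (u + 1) : ℤ) - Ns u) +
      ms s * ((Ns (s + 1) : ℤ) - Ns s - 1))) :
    zs s = zs t * ∏ u ∈ Ico (t + 1) s, zs u ^ (ms u + ms (u + 1)).toNat := by
  have hB := hU.1
  have hts' : Ns (t + 1) < Ns (s + 1) := (hB.lt_iff_lt (by omega) hs).2 (by omega)
  have hlt := hB.2.2.1 s hs
  have hlt' := hB.2.2.1 (t + 1) (by omega)
  have hpos := hB.2.2.1 t (by omega)
  have hlen := hB.le_length (show s + 1 ≤ r from hs)
  have hbd : ∀ u ≤ r, Ns (t + 1) < Ns u → Ns u < Ns (s + 1) → Even (Ns u) := by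
    intro u hu h₁ h₂
    have h₁' := (hB.lt_iff_lt (by omega) hu).1 h₁
    have h₂' := hB.le_of_le_of_lt hu hs le_rfl h₂
    obtain ⟨i, rfl⟩ : ∃ i, u = i + 1 := ⟨u - 1, by omega⟩
    exact heven i (by omega) (by omega)
  obtain ⟨k, hk⟩ : ∃ k, Ns (s + 1) - 1 = Ns (t + 1) - 1 + 2 * k + 2 :=
    ⟨(Ns (s + 1) - Ns (t + 1) - 2) / 2, by grind⟩
  have hPp : Even (∑ i ∈ range (Ns (s + 1) - 1), extendByZero a i) := by
    rwa [hB.sum_range_eq hs (by omega) (by omega), Nat.cast_sub (by omega), Nat.cast_one,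
      sub_right_comm]
  have hPj : ∀ j ≤ k, Even (∑ i ∈ range (Ns (t + 1) - 1 + 2 * j + 2), extendByZero a i) := by
    have hpar : ∀ j ≤ k, Even (∑ i ∈ range (Ns (t + 1) + 1 + 2 * j), extendByZero a i) ↔
        Even (∑ i ∈ range (Ns (t + 1) + 1), extendByZero a i) := fun j hj =>
      hB.even_sum_range_iff (by grind) (by omega) fun u hu h h' => hbd u hu (by omega) (by omega)
    intro j hj
    rw [show Ns (t + 1) - 1 + 2 * j + 2 = Ns (t + 1) + 1 + 2 * j by omega, hpar j hj,
      ← hpar k le_rfl, show Ns (t + 1) + 1 + 2 * k = Ns (s + 1) - 1 by omega]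
    exact hPp
  rw [hU.zs_eq hs, hk, hU.eps_eq_mul_prod hN (c := Ns (t + 1) - 1) (w := t + 1) (by grind)
    (by omega) (by omega) (by omega) k hs (by omega) (by omega) hPj
    fun u hu h h' => hbd u hu (by omega) (by omega), hU.zs_eq (by omega)]

end UpsilonRel

/-- **Proposition 4.1.** If `H = (a₁,…,a_n; ε₁,…,ε_n)` is a naive EGK datum of length `n`,
then `Υ(H)` is an EGK datum of length `n`. -/
theorem upsilon_isEGKDatum (n : ℕ) (a ε : Fin n → ℤ) (h : IsNaiveEGK n a ε)
    (r : ℕ) (Ns : ℕ → ℕ) (ms zs : ℕ → ℤ) (hups : UpsilonRel n a ε r Ns ms zs) :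
    IsEGKDatum n r Ns ms zs := by
  have hB := hups.1
  refine ⟨hB.1, hB.2.1, hB.2.2.1, fun s hs => ?_, hB.2.2.2.2, fun s hs => ?_,
    fun s hs heven => hups.zs_ne_zero_iff h hs heven, fun s hs hodd =>
      ⟨hups.zs_ne_zero h hs hodd, hups.zs_eq_prod_of_forall_even h hs hodd,
        fun t ht htodd hmid hP => hups.zs_eq_mul_prod_of_odd h hs ht hodd htodd hmid hP⟩⟩
  · rw [← hB.extendByZero_eq hs le_rfl (hB.2.2.1 s hs)]
    exact h.extendByZero_nonneg _
  · rw [hups.zs_eq hs]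
    exact h.eps_mem _

end
end
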